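/- arXiv:2011.07913 — 2 statements merged into one kernel-verified Lean document; each statement's English description precedes it below -/
import Mathlib

section
/- Let (N,v) be a TU-game (v : 2^N → ℝ with v(∅) = 0) and P = {P_1,…,P_m} a partition of N. For i ∈ N let P_(i) denote the block of P containing i and p_i = |P_(i)|. Then the Owen value admits the permutation formulation: for every i ∈ N, Σ_{R ⊆ P∖{P_(i)}} Σ_{S ⊆ P_(i)∖{i}} [ |S|!·(p_i−|S|−1)!·|R|!·(m−|R|−1)! / (p_i!·m!) ] · ( v(∪_{P_l∈R} P_l ∪ S ∪ {i}) − v(∪_{P_l∈R} P_l ∪ S) ) = (1/|Π_P(N)|) Σ_{σ∈Π_P(N)} ( v(P_i^σ ∪ {i}) − v(P_i^σ) ), where Π_P(N) is the set of permutations of N compatible with P and P_i^σ = {j ∈ N : σ(j) < σ(i)}. -/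
/-!
A permutation compatible with `P` is the same thing as an ordering `τ` of the blocks together
with an ordering of each block: `σ` is compatible exactly when it sorts the players by the rank
`τ P_(j)` of their block, and then `τ` is unique. The orderings sorting by a map `f` form a coset
of the stabiliser of `f` in the symmetric group, so there are `∏_b |f⁻¹ b|!` of them. Refining `f`
by splitting the block of `i` into `S`, `{i}` and the rest counts those in which the predecessors
of `i` inside its block are exactly `S`. Doing this once for the players and once for the blocks
(with `f` constant) weighs each pair `(R, S)` by
`|R|! (m-|R|-1)! |S|! (p_i-|S|-1)! ∏_{b ≠ P_(i)} |b|!`, while `|Π_P(N)| = m! ∏_b |b|!`;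
the quotient is the Owen coefficient.
-/

open Finset
open scoped Classical

/-- The set of predecessors of `i` under the permutation `σ`. -/
def preds {N : Type} [Fintype N] (σ : N ≃ Fin (Fintype.card N)) (i : N) : Finset N :=
  Finset.univ.filter (fun j => σ j < σ i)

/-- The marginal payment `x(σ)_i = min (c i) (max 0 (E - ∑_{j ∈ P_i^σ} c j))`. -/
noncomputable def payment {N : Type} [Fintype N] (c : N → ℝ) (E : ℝ)
    (σ : N ≃ Fin (Fintype.card N)) (i : N) : ℝ :=
  min (c i) (max 0 (E - ∑ j ∈ preds σ i, c j))

/-- A permutation `σ` of `N` is compatible with the partition `P` if whenever `i` and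
`j` lie in the same block and `σ i < σ k < σ j`, then `k` lies in that same block. -/
def Compatible {N : Type} [Fintype N] [DecidableEq N]
    (P : Finpartition (Finset.univ : Finset N)) (σ : N ≃ Fin (Fintype.card N)) : Prop :=
  ∀ i j k : N, (∃ B ∈ P.parts, i ∈ B ∧ j ∈ B) → σ i < σ k → σ k < σ j →
    ∃ B ∈ P.parts, i ∈ B ∧ j ∈ B ∧ k ∈ B

/-- `Π_P(N)`: the finite set of permutations of `N` compatible with `P`. -/
noncomputable def compatPerms {N : Type} [Fintype N] [DecidableEq N]
    (P : Finpartition (Finset.univ : Finset N)) : Finset (N ≃ Fin (Fintype.card N)) :=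
  Finset.univ.filter (fun σ => Compatible P σ)

/-- The RA-random arrival rule with a priori unions:
`RA^P_i = (1/|Π_P(N)|) ∑_{σ ∈ Π_P(N)} x(σ)_i`. -/
noncomputable def RAU {N : Type} [Fintype N] [DecidableEq N]
    (c : N → ℝ) (E : ℝ) (P : Finpartition (Finset.univ : Finset N)) (i : N) : ℝ :=
  (1 / ((compatPerms P).card : ℝ)) * ∑ σ ∈ compatPerms P, payment c E σ i

open scoped Nat

section SplitAt

variable {α : Type} [DecidableEq α]

def splitAt (x : α) (S : Finset α) (y : α) : Fin 3 :=
  if y ∈ S then 0 else if y = x then 1 else 2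

lemma splitAt_eq_zero_iff {x y : α} {S : Finset α} : splitAt x S y = 0 ↔ y ∈ S := by
  unfold splitAt; split_ifs <;> simp_all

lemma splitAt_eq_one_iff {x y : α} {S : Finset α} (hx : x ∉ S) : splitAt x S y = 1 ↔ y = x := by
  unfold splitAt; split_ifs with hy <;> simp_all
  exact ne_of_mem_of_not_mem hy hx

lemma splitAt_eq_two_iff {x y : α} {S : Finset α} : splitAt x S y = 2 ↔ y ∉ S ∧ y ≠ x := by
  unfold splitAt; split_ifs <;> simp_all

end SplitAt

section Orderings

variable {α : Type} [Fintype α]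

lemma card_preds (σ : α ≃ Fin (Fintype.card α)) (x : α) : #(preds σ x) = σ x := by
  rw [← Fin.card_Iio (σ x), ← card_map σ.symm.toEmbedding]
  congr 1
  ext y
  simp [preds]

lemma Equiv.eq_of_lt_iff_lt {σ τ : α ≃ Fin (Fintype.card α)}
    (h : ∀ x y, σ x < σ y ↔ τ x < τ y) : σ = τ := by
  ext x
  rw [← card_preds, ← card_preds]
  simp only [preds, h]

lemma exists_equiv_fin_lt_iff_lt {δ : Type*} [LinearOrder δ] (key : α → δ)
    (hkey : Function.Injective key) :
    ∃ σ : α ≃ Fin (Fintype.card α), ∀ x y, σ x < σ y ↔ key x < key y := by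
  let := LinearOrder.lift' key hkey
  exact ⟨(Fintype.orderIsoFinOfCardEq α rfl).symm.toEquiv,
    fun x y => (Fintype.orderIsoFinOfCardEq α rfl).symm.lt_iff_lt⟩

def Respects {β : Type*} [LinearOrder β] (f : α → β) (σ : α ≃ Fin (Fintype.card α)) : Prop :=
  ∀ x y, f x < f y → σ x < σ y

instance {β : Type*} [LinearOrder β] (f : α → β) : DecidablePred (Respects f) :=
  fun _ => inferInstanceAs (Decidable (∀ _, _))

variable {β : Type*} [LinearOrder β] {f : α → β} {σ τ : α ≃ Fin (Fintype.card α)}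

lemma exists_respects (f : α → β) : ∃ σ, Respects f σ := by
  obtain ⟨σ, hσ⟩ := exists_equiv_fin_lt_iff_lt (fun x => toLex (f x, Fintype.equivFin α x))
    fun x y h => by simp_all
  exact ⟨σ, fun x y hxy => (hσ x y).2 (Prod.Lex.toLex_lt_toLex.2 (Or.inl hxy))⟩

lemma card_filter_lt_le_of_respects (hσ : Respects f σ) (x : α) : #{y | f y < f x} ≤ σ x := by
  rw [← card_preds]
  exact card_le_card fun y hy => by simpa [preds] using hσ y x (by simpa using hy)

lemma lt_card_filter_le_of_respects (hσ : Respects f σ) (x : α) : σ x < #{y | f y ≤ f x} := by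
  rw [← card_preds, Nat.lt_iff_add_one_le,
    ← card_insert_of_notMem (s := preds σ x) (a := x) (by simp [preds])]
  refine card_le_card (insert_subset (by simp) fun y hy => ?_)
  simp only [preds, mem_filter, mem_univ, true_and] at hy ⊢
  exact not_lt.1 fun h => (hσ x y h).asymm hy

lemma apply_lt_apply_of_respects (hσ : Respects f σ) (hτ : Respects f τ) {x y : α}
    (h : f x < f y) : σ x < τ y := by
  have : #{z | f z ≤ f x} ≤ #{z | f z < f y} :=
    card_le_card fun z hz => by
      simp only [mem_filter, mem_univ, true_and] at hz ⊢
      exact hz.trans_lt h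
  have := lt_card_filter_le_of_respects hσ x
  have := card_filter_lt_le_of_respects hτ y
  rw [Fin.lt_def]; omega

lemma apply_symm_apply_of_respects (hσ : Respects f σ) (hτ : Respects f τ) (x : α) :
    f (τ.symm (σ x)) = f x := by
  rcases lt_trichotomy (f (τ.symm (σ x))) (f x) with h | h | h
  · simpa using apply_lt_apply_of_respects hτ hσ h
  · exact h
  · simpa using apply_lt_apply_of_respects hσ hτ h

def respectsEquivStabilizer {σ₀ : α ≃ Fin (Fintype.card α)} (hσ₀ : Respects f σ₀) :
    {σ // Respects f σ} ≃ {g : Equiv.Perm α // f ∘ g = f} where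
  toFun σ := ⟨σ.1.trans σ₀.symm, funext (apply_symm_apply_of_respects σ.2 hσ₀)⟩
  invFun g := ⟨g.1.trans σ₀, fun x y h =>
    hσ₀ _ _ ((congrFun g.2 x).trans_lt (h.trans_eq (congrFun g.2 y).symm))⟩
  left_inv σ := by ext; simp
  right_inv g := by ext; simp

lemma respects_toLex_iff {γ : Type*} [LinearOrder γ] (g : α → γ) :
    Respects (fun x => toLex (f x, g x)) σ ↔
      Respects f σ ∧ ∀ x y, f x = f y → g x < g y → σ x < σ y := by
  simp only [Respects, Prod.Lex.toLex_lt_toLex]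
  exact ⟨fun h => ⟨fun x y hxy => h x y (Or.inl hxy), fun x y he hg => h x y (Or.inr ⟨he, hg⟩)⟩,
    fun ⟨h₁, h₂⟩ x y => Or.rec (h₁ x y) fun ⟨he, hg⟩ => h₂ x y he hg⟩

variable [DecidableEq α]

theorem card_respects [Fintype β] (f : α → β) :
    #{σ | Respects f σ} = ∏ b, (Fintype.card {x // f x = b})! := by
  obtain ⟨σ₀, hσ₀⟩ := exists_respects f
  rw [← DomMulAct.stabilizer_card f, ← Fintype.card_subtype]
  exact Fintype.card_congr (respectsEquivStabilizer hσ₀)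

lemma respects_splitAt_iff {x : α} {S : Finset α}
    (hS : S ⊆ ({y | f y = f x} : Finset α).erase x) :
    Respects (fun y => toLex (f y, splitAt x S y)) σ ↔
      Respects f σ ∧ preds σ x ∩ ({y | f y = f x} : Finset α) = S := by
  have hSx : x ∉ S := fun h => by simpa using hS h
  have hSf : ∀ y ∈ S, f y = f x := fun y hy => by simpa using (mem_erase.1 (hS hy)).2
  rw [respects_toLex_iff]
  refine and_congr_right fun hf => ⟨fun h => ?_, fun h y z hyz hlt => ?_⟩
  · ext y
    simp only [preds, mem_inter, mem_filter, mem_univ, true_and]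
    refine ⟨fun ⟨hlt, hy⟩ => by_contra fun hyS => ?_, fun hy => ⟨?_, hSf y hy⟩⟩
    · have hyx : y ≠ x := by rintro rfl; exact lt_irrefl _ hlt
      exact (h x y hy.symm (by simp [splitAt, hSx, hyS, hyx])).asymm hlt
    · exact h y x (hSf y hy) (by simp [splitAt, hSx, hy])
  · have hmem : ∀ w, f w = f x → (w ∈ S ↔ σ w < σ x) := fun w hw => by
      rw [← h]; simp [preds, hw]
    have hafter : ∀ w, f w = f x → w ∉ S → w ≠ x → σ x < σ w := fun w hw hwS hwx =>
      lt_of_le_of_ne (not_lt.1 fun hc => hwS ((hmem w hw).2 hc)) (σ.injective.ne hwx.symm)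
    simp only [splitAt] at hlt
    split_ifs at hlt with hyS hzS hzx hyx hzS hzx <;> simp at hlt
    · exact hzx ▸ (hmem y (hSf y hyS)).1 hyS
    · exact ((hmem y (hSf y hyS)).1 hyS).trans (hafter z (hyz.symm.trans (hSf y hyS)) hzS hzx)
    · exact hyx ▸ hafter z (hyx ▸ hyz).symm hzS hzx

lemma prod_factorial_card_filter_splitAt {x : α} {S : Finset α}
    (hS : S ⊆ ({y | f y = f x} : Finset α).erase x) (b : β) :
    ∏ k, (#{y | f y = b ∧ splitAt x S y = k})! =
      if b = f x then (#S)! * (#({y | f y = f x} : Finset α) - #S - 1)!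
      else (#({y | f y = b} : Finset α))! := by
  have hSx : x ∉ S := fun h => by simpa using hS h
  have hSf : ∀ y ∈ S, f y = f x := fun y hy => by simpa using (mem_erase.1 (hS hy)).2
  rw [Fin.prod_univ_three]
  simp only [splitAt_eq_zero_iff, splitAt_eq_one_iff hSx, splitAt_eq_two_iff]
  split_ifs with hb
  · subst hb
    have h₀ : ({y | f y = f x ∧ y ∈ S} : Finset α) = S := by
      ext y; by_cases hy : y ∈ S <;> simp [hy, hSf]
    have h₁ : ({y | f y = f x ∧ y = x} : Finset α) = {x} := by
      ext y; simp only [mem_filter, mem_univ, true_and, mem_singleton, and_iff_right_iff_imp]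
      rintro rfl; rfl
    have h₂ : ({y | f y = f x ∧ y ∉ S ∧ y ≠ x} : Finset α) =
        ({y | f y = f x} : Finset α) \ insert x S := by
      ext y; by_cases hy : y ∈ S <;> simp [hy]
    rw [h₀, h₁, h₂, card_sdiff_of_subset (insert_subset (by simp) (hS.trans (erase_subset _ _))),
      card_insert_of_notMem hSx]
    simp [Nat.sub_sub]
  · have h₀ : ({y | f y = b ∧ y ∈ S} : Finset α) = ∅ := by
      ext y; simp only [mem_filter, mem_univ, true_and, notMem_empty, iff_false, not_and]
      exact fun h hy => hb (h ▸ hSf y hy)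
    have h₁ : ({y | f y = b ∧ y = x} : Finset α) = ∅ := by
      ext y; simp only [mem_filter, mem_univ, true_and, notMem_empty, iff_false, not_and]
      rintro h rfl; exact hb h.symm
    have h₂ : ({y | f y = b ∧ y ∉ S ∧ y ≠ x} : Finset α) = ({y | f y = b} : Finset α) := by
      ext y; simp only [mem_filter, mem_univ, true_and, and_iff_left_iff_imp]
      intro h; exact ⟨fun hy => hb (h ▸ hSf y hy), by rintro rfl; exact hb h.symm⟩
    simp [h₀, h₁, h₂]

theorem card_respects_preds_inter [Fintype β] {x : α} {S : Finset α}
    (hS : S ⊆ ({y | f y = f x} : Finset α).erase x) :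
    #{σ | Respects f σ ∧ preds σ x ∩ ({y | f y = f x} : Finset α) = S} =
      (∏ b ∈ univ.erase (f x), (#({y | f y = b} : Finset α))!) * (#S)! *
        (#({y | f y = f x} : Finset α) - #S - 1)! := by
  rw [congrArg card (filter_congr fun σ _ => (respects_splitAt_iff hS).symm),
    card_respects (fun y => toLex (f y, splitAt x S y)), ← toLex.prod_comp, Fintype.prod_prod_type]
  simp only [Fintype.card_subtype, toLex_inj, Prod.mk.injEq, prod_factorial_card_filter_splitAt hS]
  rw [← mul_prod_erase univ _ (mem_univ (f x)), if_pos rfl, mul_comm, mul_assoc]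
  congr 1
  exact prod_congr rfl fun b hb => if_neg (ne_of_mem_erase hb)

lemma preds_eq_union_of_respects (hσ : Respects f σ) (x : α) :
    preds σ x = ({y | f y < f x} : Finset α) ∪ (preds σ x ∩ ({y | f y = f x} : Finset α)) := by
  ext y
  simp only [preds, mem_union, mem_inter, mem_filter, mem_univ, true_and]
  refine ⟨fun h => ?_, ?_⟩
  · rcases lt_trichotomy (f y) (f x) with hlt | heq | hgt
    exacts [Or.inl hlt, Or.inr ⟨h, heq⟩, absurd (hσ x y hgt) h.asymm]
  · rintro (h | ⟨h, _⟩)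
    exacts [hσ y x h, h]

theorem sum_respects_preds_inter {M : Type*} [AddCommMonoid M] [Fintype β] (f : α → β) (x : α)
    (G : Finset α → M) :
    ∑ σ with Respects f σ, G (preds σ x ∩ ({y | f y = f x} : Finset α)) =
      ∑ S ∈ (({y | f y = f x} : Finset α).erase x).powerset,
        ((∏ b ∈ univ.erase (f x), (#({y | f y = b} : Finset α))!) * (#S)! *
          (#({y | f y = f x} : Finset α) - #S - 1)!) • G S := by
  rw [← sum_fiberwise_of_maps_to (g := fun σ => preds σ x ∩ ({y | f y = f x} : Finset α))
    fun σ _ => ?_]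
  · refine sum_congr rfl fun S hS => ?_
    rw [sum_congr rfl fun σ hσ => by rw [(mem_filter.1 hσ).2], sum_const, filter_filter,
      card_respects_preds_inter (mem_powerset.1 hS)]
  · refine mem_powerset.2 fun y hy => ?_
    simp only [preds, mem_inter, mem_filter, mem_univ, true_and, mem_erase] at hy ⊢
    exact ⟨fun h => (h ▸ hy.1).false, hy.2⟩

theorem sum_preds {M : Type*} [AddCommMonoid M] (x : α) (G : Finset α → M) :
    ∑ σ : α ≃ Fin (Fintype.card α), G (preds σ x) =
      ∑ T ∈ (univ.erase x).powerset, ((#T)! * (Fintype.card α - #T - 1)!) • G T := by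
  simpa [Respects] using sum_respects_preds_inter (fun _ => ()) x G

end Orderings

lemma Finset.sum_powerset_erase_attach {γ M : Type*} [DecidableEq γ] [AddCommMonoid M]
    {s : Finset γ} (a : s) (F : Finset γ → M) :
    ∑ T ∈ (s.attach.erase a).powerset, F (T.image Subtype.val) =
      ∑ R ∈ (s.erase a).powerset, F R := by
  rw [← sum_image fun _ _ _ _ h => image_injective Subtype.val_injective h, ← powerset_image,
    image_erase Subtype.val_injective, attach_image_val]

section Partitions

variable {N : Type} [Fintype N] [DecidableEq N] (P : Finpartition (univ : Finset N))

def blockOf (x : N) : P.parts := ⟨P.part x, P.part_mem.2 (mem_univ x)⟩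

variable {P}

lemma blockOf_eq_iff {x : N} {b : P.parts} : blockOf P x = b ↔ x ∈ (b : Finset N) :=
  Subtype.ext_iff.trans (P.part_eq_iff_mem b.2)

lemma mem_blockOf (x : N) : x ∈ (blockOf P x : Finset N) := blockOf_eq_iff.1 rfl

lemma filter_blockOf_eq (b : P.parts) : ({y | blockOf P y = b} : Finset N) = b := by
  ext; simp [blockOf_eq_iff]

lemma filter_rank_blockOf_lt (τ : P.parts ≃ Fin (Fintype.card P.parts)) (x : N) :
    ({y | τ (blockOf P y) < τ (blockOf P x)} : Finset N) =
      ((preds τ (blockOf P x)).image Subtype.val).biUnion id := by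
  ext y
  simp only [preds, mem_filter, mem_univ, true_and, mem_biUnion, mem_image, id]
  refine ⟨fun h => ⟨_, ⟨blockOf P y, h, rfl⟩, mem_blockOf y⟩, ?_⟩
  rintro ⟨_, ⟨b, hb, rfl⟩, hy⟩
  rwa [blockOf_eq_iff.2 hy]

lemma filter_rank_blockOf_eq (τ : P.parts ≃ Fin (Fintype.card P.parts)) (b : P.parts) :
    ({y | τ (blockOf P y) = τ b} : Finset N) = b := by
  simpa using filter_blockOf_eq b

variable {σ : N ≃ Fin (Fintype.card N)}

lemma compatible_of_respects {τ : P.parts ≃ Fin (Fintype.card P.parts)}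
    (h : Respects (τ ∘ blockOf P) σ) : Compatible P σ := by
  rintro i j k ⟨B, hB, hi, hj⟩ hik hkj
  have hbi : blockOf P i = ⟨B, hB⟩ := blockOf_eq_iff.2 hi
  have hbj : blockOf P j = ⟨B, hB⟩ := blockOf_eq_iff.2 hj
  have hk : blockOf P k = ⟨B, hB⟩ := by
    by_contra hne
    rcases lt_or_gt_of_ne (τ.injective.ne hne) with hlt | hlt
    · exact (h k i (by simpa [hbi] using hlt)).asymm hik
    · exact (h j k (by simpa [hbj] using hlt)).asymm hkj
  exact ⟨B, hB, hi, hj, blockOf_eq_iff.1 hk⟩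

lemma exists_respects_of_compatible (h : Compatible P σ) :
    ∃ τ : P.parts ≃ Fin (Fintype.card P.parts), Respects (τ ∘ blockOf P) σ := by
  let key : P.parts → Fin (Fintype.card N) :=
    fun b => (b.1.image σ).min' ((P.nonempty_of_mem_parts b.2).image σ)
  have key_mem : ∀ b : P.parts, ∃ z ∈ (b : Finset N), σ z = key b :=
    fun b => mem_image.1 (min'_mem _ _)
  have eq_of_mem : ∀ {b c : P.parts} {z : N}, z ∈ (b : Finset N) → z ∈ (c : Finset N) → b = c :=
    fun hb hc => Subtype.ext (P.eq_of_mem_parts (Subtype.prop _) (Subtype.prop _) hb hc)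
  have hinj : Function.Injective key := fun b c hbc => by
    obtain ⟨z, hz, hzb⟩ := key_mem b
    obtain ⟨w, hw, hwc⟩ := key_mem c
    exact eq_of_mem hz (σ.injective (hzb.trans (hbc.trans hwc.symm)) ▸ hw)
  have hbefore : ∀ b c : P.parts, key b < key c →
      ∀ x ∈ (b : Finset N), ∀ y ∈ (c : Finset N), σ x < σ y := by
    intro b c hbc x hx y hy
    obtain ⟨z, hz, hzb⟩ := key_mem b
    have hzy : σ z < σ y := hzb ▸ hbc.trans_le (min'_le _ _ (mem_image_of_mem σ hy))
    -- otherwise `y` sits between the first element `z` of `b` and `x ∈ b`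
    refine lt_of_not_ge fun hyx => ?_
    have hxy : x ≠ y := by rintro rfl; exact hbc.ne (congrArg key (eq_of_mem hx hy))
    obtain ⟨B, hB, hzB, hxB, hyB⟩ :=
      h z x y ⟨b, b.2, hz, hx⟩ hzy (lt_of_le_of_ne hyx (σ.injective.ne hxy.symm))
    have hb : b = ⟨B, hB⟩ := eq_of_mem hx hxB
    exact hbc.ne (congrArg key (hb.trans (eq_of_mem hyB hy)))
  obtain ⟨τ, hτ⟩ := exists_equiv_fin_lt_iff_lt key hinj
  exact ⟨τ, fun x y hxy => hbefore _ _ ((hτ _ _).1 hxy) x (mem_blockOf x) y (mem_blockOf y)⟩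

lemma eq_of_respects {τ τ' : P.parts ≃ Fin (Fintype.card P.parts)}
    (h : Respects (τ ∘ blockOf P) σ) (h' : Respects (τ' ∘ blockOf P) σ) : τ = τ' := by
  have key : ∀ {τ τ' : P.parts ≃ Fin (Fintype.card P.parts)}, Respects (τ ∘ blockOf P) σ →
      Respects (τ' ∘ blockOf P) σ → ∀ b c, τ b < τ c → τ' b < τ' c := by
    intro τ τ' h h' b c hbc
    obtain ⟨x, hx⟩ := P.nonempty_of_mem_parts b.2
    obtain ⟨y, hy⟩ := P.nonempty_of_mem_parts c.2
    obtain rfl := blockOf_eq_iff.2 hx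
    obtain rfl := blockOf_eq_iff.2 hy
    rcases lt_trichotomy (τ' (blockOf P x)) (τ' (blockOf P y)) with hlt | heq | hgt
    · exact hlt
    · exact absurd (τ'.injective heq ▸ hbc) (lt_irrefl _)
    · exact absurd (h' y x hgt) (h x y hbc).asymm
  exact Equiv.eq_of_lt_iff_lt fun b c => ⟨key h h' b c, key h' h b c⟩

theorem sum_compatPerms {M : Type*} [AddCommMonoid M] (F : (N ≃ Fin (Fintype.card N)) → M) :
    ∑ σ ∈ compatPerms P, F σ =
      ∑ τ : P.parts ≃ Fin (Fintype.card P.parts), ∑ σ with Respects (τ ∘ blockOf P) σ, F σ := by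
  rw [← sum_biUnion (s := univ) (t := fun τ : P.parts ≃ Fin (Fintype.card P.parts) =>
      ({σ | Respects (τ ∘ blockOf P) σ} : Finset (N ≃ Fin (Fintype.card N))))
    fun τ _ τ' _ hne => disjoint_left.2 fun σ hσ hσ' => hne <| by
      simp only [mem_filter, mem_univ, true_and] at hσ hσ'
      exact eq_of_respects hσ hσ']
  congr 1
  ext σ
  simp only [compatPerms, mem_filter, mem_univ, true_and, mem_biUnion]
  exact ⟨exists_respects_of_compatible, fun ⟨τ, hτ⟩ => compatible_of_respects hτ⟩

theorem card_compatPerms : #(compatPerms P) = (#P.parts)! * ∏ b ∈ P.parts, (#b)! := by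
  rw [card_eq_sum_ones, sum_compatPerms]
  simp only [← card_eq_sum_ones]
  have hτ : ∀ τ : P.parts ≃ Fin (Fintype.card P.parts),
      #{σ | Respects (τ ∘ blockOf P) σ} = ∏ b ∈ P.parts, (#b)! := fun τ => by
    rw [card_respects, ← τ.prod_comp, ← prod_coe_sort P.parts]
    simp only [Fintype.card_subtype, Function.comp_apply, filter_rank_blockOf_eq]
  rw [sum_congr rfl fun τ _ => hτ τ, sum_const, card_univ, Fintype.card_equiv (Fintype.equivFin _),
    Fintype.card_coe, smul_eq_mul]

lemma prod_erase_factorial_card_filter_rank_blockOf (τ : P.parts ≃ Fin (Fintype.card P.parts))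
    (b₀ : P.parts) :
    ∏ k ∈ univ.erase (τ b₀), (#({y | τ (blockOf P y) = k} : Finset N))! =
      ∏ b ∈ P.parts.erase b₀, (#b)! := by
  rw [← prod_erase_attach, ← univ_eq_attach]
  refine prod_equiv τ.symm (fun k => by simp [Equiv.symm_apply_eq]) fun k _ => ?_
  rw [← filter_rank_blockOf_eq τ (τ.symm k), Equiv.apply_symm_apply]

theorem sum_compatPerms_preds {M : Type*} [AddCommMonoid M] (G : Finset N → M) {i : N}
    {B : Finset N} (hB : B ∈ P.parts) (hiB : i ∈ B) :
    ∑ σ ∈ compatPerms P, G (preds σ i) =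
      (∏ b ∈ P.parts.erase B, (#b)!) •
        ∑ R ∈ (P.parts.erase B).powerset, ∑ S ∈ (B.erase i).powerset,
          ((#R)! * (#P.parts - #R - 1)! * ((#S)! * (#B - #S - 1)!)) • G (R.biUnion id ∪ S) := by
  have hi : blockOf P i = ⟨B, hB⟩ := blockOf_eq_iff.2 hiB
  have inner : ∀ τ : P.parts ≃ Fin (Fintype.card P.parts),
      ∑ σ with Respects (τ ∘ blockOf P) σ, G (preds σ i) =
        (∏ b ∈ P.parts.erase B, (#b)!) • ∑ S ∈ (B.erase i).powerset,
          ((#S)! * (#B - #S - 1)!) • G (((preds τ ⟨B, hB⟩).image Subtype.val).biUnion id ∪ S) := by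
    intro τ
    rw [sum_congr rfl fun σ hσ => by rw [preds_eq_union_of_respects (mem_filter.1 hσ).2 i],
      sum_respects_preds_inter (τ ∘ blockOf P) i
        fun S => G (({y | (τ ∘ blockOf P) y < (τ ∘ blockOf P) i} : Finset N) ∪ S)]
    simp only [Function.comp_apply, filter_rank_blockOf_lt, filter_rank_blockOf_eq]
    simp only [hi, prod_erase_factorial_card_filter_rank_blockOf, smul_sum, mul_assoc, mul_smul]
  rw [sum_compatPerms, sum_congr rfl fun τ _ => inner τ, ← smul_sum,
    sum_preds (⟨B, hB⟩ : P.parts) fun T => ∑ S ∈ (B.erase i).powerset,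
      ((#S)! * (#B - #S - 1)!) • G ((T.image Subtype.val).biUnion id ∪ S), Fintype.card_coe,
    ← sum_powerset_erase_attach (⟨B, hB⟩ : P.parts), ← univ_eq_attach]
  simp only [smul_sum, mul_smul, card_image_of_injective _ Subtype.val_injective]

end Partitions

theorem owen_eq_permutation_formulation_general {N : Type} [Fintype N] [DecidableEq N]
    (v : Finset N → ℝ)
    (P : Finpartition (Finset.univ : Finset N))
    (i : N) (B : Finset N) (hB : B ∈ P.parts) (hiB : i ∈ B) :
    ∑ R ∈ (P.parts.erase B).powerset, ∑ S ∈ (B.erase i).powerset,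
        ((Nat.factorial S.card * Nat.factorial (B.card - S.card - 1) *
          Nat.factorial R.card * Nat.factorial (P.parts.card - R.card - 1) : ℝ) /
          ((Nat.factorial B.card : ℝ) * (Nat.factorial P.parts.card : ℝ))) *
        (v (insert i (R.biUnion id ∪ S)) - v (R.biUnion id ∪ S))
      = (1 / ((compatPerms P).card : ℝ)) *
          ∑ σ ∈ compatPerms P, (v (insert i (preds σ i)) - v (preds σ i)) := by
  have hsum := sum_compatPerms_preds (fun A => v (insert i A) - v A) hB hiB
  beta_reduce at hsum
  rw [hsum, card_compatPerms, ← mul_prod_erase _ _ hB]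
  simp only [nsmul_eq_mul, mul_sum, Nat.cast_mul, Nat.cast_prod]
  refine sum_congr rfl fun R _ => sum_congr rfl fun S _ => ?_
  field_simp

/-- For a TU-game `(N, v)` with `v ∅ = 0` and a partition `P` of `N`,
the Owen value admits the permutation formulation: for every player `i`, with block
`B = P_(i)`, `p_i = |B|` and `m = |P|`,
`∑_{R ⊆ P \ {B}} ∑_{S ⊆ B \ {i}} (|S|! (p_i-|S|-1)! |R|! (m-|R|-1)!)/(p_i! m!)
   (v (∪R ∪ S ∪ {i}) - v (∪R ∪ S))
 = (1/|Π_P(N)|) ∑_{σ ∈ Π_P(N)} (v (P_i^σ ∪ {i}) - v (P_i^σ))`. -/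
theorem owen_eq_permutation_formulation {N : Type} [Fintype N] [DecidableEq N] [Nonempty N]
    (v : Finset N → ℝ) (hv0 : v ∅ = 0)
    (P : Finpartition (Finset.univ : Finset N))
    (i : N) (B : Finset N) (hB : B ∈ P.parts) (hiB : i ∈ B) :
    ∑ R ∈ (P.parts.erase B).powerset, ∑ S ∈ (B.erase i).powerset,
        ((Nat.factorial S.card * Nat.factorial (B.card - S.card - 1) *
          Nat.factorial R.card * Nat.factorial (P.parts.card - R.card - 1) : ℝ) /
          ((Nat.factorial B.card : ℝ) * (Nat.factorial P.parts.card : ℝ))) *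
        (v (insert i (R.biUnion id ∪ S)) - v (R.biUnion id ∪ S))
      = (1 / ((compatPerms P).card : ℝ)) *
          ∑ σ ∈ compatPerms P, (v (insert i (preds σ i)) - v (preds σ i)) :=
  owen_eq_permutation_formulation_general v P i B hB hiB
end

section
/- Let (N,c,E,P) be a bankruptcy problem with a priori unions, i ∈ N with c_i > 0, ε > 0 and α ∈ (0,1). Let ℓ ≥ 1 and equip Π_P(N)^ℓ with the ℓ-fold product of the uniform probability measure on Π_P(N); define the estimator RA̅^P_i(σ_1,…,σ_ℓ) = (1/ℓ) Σ_{k=1}^{ℓ} x(σ_k)_i. If ℓ ≥ c_i²/(4αε²), then ℙ( |RA̅^P_i − RA^P_i| ≥ ε ) ≤ α. -/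
open Finset
open scoped Classical

/-- The estimator: the mean of the marginal payments of `i` over a sample
`ω = (σ_1, …, σ_ℓ)` of `ℓ` compatible permutations. -/
noncomputable def estimator {N : Type} [Fintype N] [DecidableEq N]
    (c : N → ℝ) (E : ℝ) (P : Finpartition (Finset.univ : Finset N)) (i : N)
    (ℓ : ℕ) (ω : Fin ℓ → {σ : N ≃ Fin (Fintype.card N) // σ ∈ compatPerms P}) : ℝ :=
  (1 / (ℓ : ℝ)) * ∑ k : Fin ℓ, payment c E (ω k).1 i

/-!
Under the `ℓ`-fold product of the uniform measure on `Π_P(N)`, the estimator is the sample mean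
of `ℓ` independent copies of the marginal payment `σ ↦ x(σ)_i`, whose expectation is `RA^P_i`.
The payment takes values in `[0, c_i]`, so by Popoviciu's inequality its variance is at most
`c_i² / 4`; the variance of the sample mean is then at most `c_i² / (4ℓ)`, and Chebyshev's
inequality bounds the deviation probability by `c_i² / (4ℓε²) ≤ α`.
-/

open MeasureTheory ProbabilityTheory

noncomputable def sampleMean {Ω ι : Type*} [Fintype ι] (X : Ω → ℝ) (ω : ι → Ω) : ℝ :=
  (Fintype.card ι : ℝ)⁻¹ * ∑ k, X (ω k)

lemma sampleMean_eq_const_mul_sum {Ω ι : Type*} [Fintype ι] (X : Ω → ℝ) :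
    sampleMean X = fun ω : ι → Ω ↦ (Fintype.card ι : ℝ)⁻¹ * (∑ k, fun ω ↦ X (ω k)) ω := by
  ext ω
  simp [sampleMean]

section SampleMean

variable {Ω ι : Type*} [MeasurableSpace Ω] {ν : Measure Ω} [IsProbabilityMeasure ν]
  [Fintype ι] {X : Ω → ℝ}

lemma memLp_sampleMean {p : ENNReal} (hX : MemLp X p ν) :
    MemLp (sampleMean X) p (Measure.pi fun _ : ι ↦ ν) := by
  have hsum := memLp_finsetSum' Finset.univ fun k _ ↦
    hX.comp_measurePreserving (measurePreserving_eval (fun _ : ι ↦ ν) k)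
  rw [sampleMean_eq_const_mul_sum]
  simpa [Function.comp_def] using hsum.const_mul (Fintype.card ι : ℝ)⁻¹

lemma integral_sampleMean [Nonempty ι] (hX : Integrable X ν) :
    ∫ ω, sampleMean X ω ∂(Measure.pi fun _ : ι ↦ ν) = ν[X] := by
  have hcoord (k : ι) : ∫ ω, X (ω k) ∂(Measure.pi fun _ : ι ↦ ν) = ν[X] :=
    integral_comp_eval (μ := fun _ ↦ ν) hX.aestronglyMeasurable
  simp only [sampleMean, integral_const_mul,
    integral_finsetSum _ fun k _ ↦ integrable_comp_eval (μ := fun _ ↦ ν) hX, hcoord,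
    Finset.sum_const, Finset.card_univ, nsmul_eq_mul]
  field_simp

lemma variance_sampleMean (hX : MemLp X 2 ν) :
    Var[sampleMean X; Measure.pi fun _ : ι ↦ ν] = Var[X; ν] / Fintype.card ι := by
  rw [sampleMean_eq_const_mul_sum, variance_const_mul,
    variance_sum_pi (μ := fun _ : ι ↦ ν) (X := fun _ ↦ X) fun _ ↦ hX]
  simp only [Finset.sum_const, Finset.card_univ, nsmul_eq_mul]
  rcases eq_or_ne (Fintype.card ι : ℝ) 0 with hcard | hcard
  · simp [hcard]
  · field_simp

lemma measureReal_sampleMean_deviation_le [Nonempty ι] {a b ε : ℝ} (hX : AEMeasurable X ν)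
    (hab : ∀ᵐ ω ∂ν, X ω ∈ Set.Icc a b) (hε : 0 < ε) :
    (Measure.pi fun _ : ι ↦ ν).real {ω | ε ≤ |sampleMean X ω - ν[X]|}
      ≤ ((b - a) / 2) ^ 2 / (Fintype.card ι * ε ^ 2) := by
  have hX2 : MemLp X 2 ν := memLp_of_bounded hab hX.aestronglyMeasurable 2
  have hchebyshev := meas_ge_le_variance_div_sq (memLp_sampleMean (ι := ι) hX2) hε
  rw [integral_sampleMean (hX2.integrable one_le_two), variance_sampleMean hX2] at hchebyshev
  have hpopoviciu : Var[X; ν] ≤ ((b - a) / 2) ^ 2 := variance_le_sq_of_bounded hab hX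
  calc _ ≤ Var[X; ν] / Fintype.card ι / ε ^ 2 :=
        ENNReal.toReal_le_of_le_ofReal (by have := variance_nonneg X ν; positivity) hchebyshev
    _ ≤ ((b - a) / 2) ^ 2 / (Fintype.card ι * ε ^ 2) := by
        rw [div_div]
        gcongr

end SampleMean

section UniformOn

variable {S : Type*} [Fintype S] [MeasurableSpace S] [MeasurableSingletonClass S]

lemma pi_uniformOn_univ (ι : Type*) [Fintype ι] :
    (Measure.pi fun _ : ι ↦ uniformOn (Set.univ : Set S)) = uniformOn Set.univ := by
  simpa using (uniformOn_pi (f := fun _ : ι ↦ (Set.univ : Set S))).symm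

lemma measureReal_uniformOn_univ (p : S → Prop) :
    (uniformOn (Set.univ : Set S)).real {x | p x} = #(univ.filter p) / Fintype.card S := by
  rw [← coe_filter_univ, measureReal_def, uniformOn_univ, Measure.count_apply_finset]
  simp

lemma integral_uniformOn_univ (f : S → ℝ) :
    ∫ x, f x ∂uniformOn (Set.univ : Set S) = (Fintype.card S : ℝ)⁻¹ * ∑ x, f x := by
  rw [integral_fintype (f := f) .of_finite]
  simp [measureReal_def, uniformOn_univ, Finset.mul_sum]

end UniformOn

section RandomArrival

variable {N : Type} [Fintype N] {c : N → ℝ} {E : ℝ} {i : N}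

lemma payment_mem_Icc (hc : 0 ≤ c i) (σ : N ≃ Fin (Fintype.card N)) :
    payment c E σ i ∈ Set.Icc 0 (c i) :=
  ⟨le_min hc (le_max_left _ _), min_le_left _ _⟩

variable [DecidableEq N] {P : Finpartition (Finset.univ : Finset N)}

lemma estimator_eq_sampleMean (ℓ : ℕ) (ω : Fin ℓ → {σ // σ ∈ compatPerms P}) :
    estimator c E P i ℓ ω = sampleMean (fun σ ↦ payment c E σ.1 i) ω := by
  simp [estimator, sampleMean]

lemma RAU_eq_integral_uniformOn [MeasurableSpace {σ // σ ∈ compatPerms P}]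
    [MeasurableSingletonClass {σ // σ ∈ compatPerms P}] :
    RAU c E P i = ∫ σ : {σ // σ ∈ compatPerms P}, payment c E σ.1 i ∂uniformOn Set.univ := by
  rw [integral_uniformOn_univ, RAU, Fintype.card_coe, one_div,
    Finset.sum_coe_sort (compatPerms P) (fun σ ↦ payment c E σ i)]

end RandomArrival

theorem chebyshev_sample_size_bound_general {N : Type} [Fintype N] [DecidableEq N]
    (c : N → ℝ) (E : ℝ) (hc : ∀ i, 0 ≤ c i)
    (P : Finpartition (Finset.univ : Finset N)) (i : N)
    (ε α : ℝ) (hε : 0 < ε) (hα0 : 0 < α)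
    (ℓ : ℕ) (hℓ : 1 ≤ ℓ)
    (hsize : (ℓ : ℝ) ≥ c i ^ 2 / (4 * α * ε ^ 2)) :
    ((Finset.univ.filter
        (fun ω : Fin ℓ → {σ : N ≃ Fin (Fintype.card N) // σ ∈ compatPerms P} =>
          ε ≤ |estimator c E P i ℓ ω - RAU c E P i|)).card : ℝ) /
      (Fintype.card (Fin ℓ → {σ : N ≃ Fin (Fintype.card N) // σ ∈ compatPerms P}) : ℝ)
      ≤ α := by
  let _ : MeasurableSpace {σ // σ ∈ compatPerms P} := ⊤
  have : Nonempty (Fin ℓ) := ⟨⟨0, hℓ⟩⟩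
  rcases isEmpty_or_nonempty {σ // σ ∈ compatPerms P} with hempty | hnonempty
  -- with no compatible permutation the sample space is empty and the ratio is `0 / 0 = 0`
  · simp [hα0.le]
  rw [← measureReal_uniformOn_univ, ← pi_uniformOn_univ]
  simp only [estimator_eq_sampleMean]
  rw [RAU_eq_integral_uniformOn]
  have hdeviation := measureReal_sampleMean_deviation_le (ι := Fin ℓ)
    (ν := uniformOn (Set.univ : Set {σ // σ ∈ compatPerms P}))
    (X := fun σ ↦ payment c E σ.1 i) Measurable.of_discrete.aemeasurable
    (.of_forall fun σ ↦ payment_mem_Icc (hc i) σ.1) hε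
  refine hdeviation.trans ?_
  rw [ge_iff_le, div_le_iff₀ (by positivity)] at hsize
  rw [Fintype.card_fin, div_le_iff₀ (by positivity)]
  linarith

/-- (Chebyshev/Popoviciu sample size bound.) If the sample size
satisfies `ℓ ≥ c i ² / (4 α ε²)`, then under the `ℓ`-fold product of the uniform
probability measure on `Π_P(N)` (i.e. the uniform measure on the finite product space),
`ℙ(|RA̅^P_i − RA^P_i| ≥ ε) ≤ α`. -/
theorem chebyshev_sample_size_bound {N : Type} [Fintype N] [DecidableEq N] [Nonempty N]
    (c : N → ℝ) (E : ℝ) (hc : ∀ i, 0 ≤ c i) (hE0 : 0 ≤ E) (hE : E ≤ ∑ j, c j)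
    (P : Finpartition (Finset.univ : Finset N)) (i : N) (hci : 0 < c i)
    (ε α : ℝ) (hε : 0 < ε) (hα0 : 0 < α) (hα1 : α < 1)
    (ℓ : ℕ) (hℓ : 1 ≤ ℓ)
    (hsize : (ℓ : ℝ) ≥ c i ^ 2 / (4 * α * ε ^ 2)) :
    ((Finset.univ.filter
        (fun ω : Fin ℓ → {σ : N ≃ Fin (Fintype.card N) // σ ∈ compatPerms P} =>
          ε ≤ |estimator c E P i ℓ ω - RAU c E P i|)).card : ℝ) /
      (Fintype.card (Fin ℓ → {σ : N ≃ Fin (Fintype.card N) // σ ∈ compatPerms P}) : ℝ)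
      ≤ α :=
  chebyshev_sample_size_bound_general c E hc P i ε α hε hα0 ℓ hℓ hsize
end
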